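/- arXiv:1903.10240 — 5 statements merged into one kernel-verified Lean document; each statement's English description precedes it below -/
import Mathlib

section
/- For every pair of integers r ≥ 2 and k with 1 ≤ k ≤ r, there exist integers χ₁, χ₂ and a polarization (w₁, w₂) (rational numbers with 0 < w₁ < 1, 0 < w₂ < 1, w₁ + w₂ = 1) such that, setting χ = χ₁ + χ₂ − r, the numerical conditions χ·w₁ ≤ χ₁ ≤ χ·w₁ + k and χ·w₂ + r − k ≤ χ₂ ≤ χ·w₂ + r hold. In other words, the set W_{r,k} ⊆ ℤ² of pairs (χ₁, χ₂) admitting such a polarization is nonempty. -/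
/-- A polarization is a pair of rationals `(w₁, w₂)` with `0 < wᵢ < 1` and `w₁ + w₂ = 1`. -/
def IsPolarization (w₁ w₂ : ℚ) : Prop :=
  0 < w₁ ∧ w₁ < 1 ∧ 0 < w₂ ∧ w₂ < 1 ∧ w₁ + w₂ = 1

/-- The numerical conditions for `(r, k, χ₁, χ₂)` with respect to `(w₁, w₂)`,
where `χ = χ₁ + χ₂ - r`. -/
def NumericalConditions (r k χ₁ χ₂ : ℤ) (w₁ w₂ : ℚ) : Prop :=
  ((χ₁ + χ₂ - r : ℤ) : ℚ) * w₁ ≤ (χ₁ : ℚ) ∧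
  (χ₁ : ℚ) ≤ ((χ₁ + χ₂ - r : ℤ) : ℚ) * w₁ + (k : ℚ) ∧
  ((χ₁ + χ₂ - r : ℤ) : ℚ) * w₂ + (r : ℚ) - (k : ℚ) ≤ (χ₂ : ℚ) ∧
  (χ₂ : ℚ) ≤ ((χ₁ + χ₂ - r : ℤ) : ℚ) * w₂ + (r : ℚ)

theorem isPolarization_half : IsPolarization (1 / 2) (1 / 2) := by
  unfold IsPolarization
  norm_num

/-- At `(χ₁, χ₂) = (0, r)` the total `χ` vanishes, so the polarization drops out. -/
theorem numericalConditions_zero_self {r k : ℤ} (hk : 0 ≤ k) (w₁ w₂ : ℚ) :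
    NumericalConditions r k 0 r w₁ w₂ := by
  have hkq : (0 : ℚ) ≤ k := by exact_mod_cast hk
  refine ⟨?_, ?_, ?_, ?_⟩ <;>
    simp only [zero_add, sub_self, Int.cast_zero, zero_mul] <;> linarith

theorem W_rk_nonempty_general (r k : ℤ) (hk1 : 1 ≤ k) :
    ∃ χ₁ χ₂ : ℤ, ∃ w₁ w₂ : ℚ,
      IsPolarization w₁ w₂ ∧ NumericalConditions r k χ₁ χ₂ w₁ w₂ :=
  ⟨0, r, 1 / 2, 1 / 2, isPolarization_half,
    numericalConditions_zero_self (by omega) _ _⟩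

/-- Lemma 3.4: the set `W_{r,k}` of pairs `(χ₁, χ₂)` admitting a polarization satisfying the
numerical conditions is nonempty. -/
theorem W_rk_nonempty (r k : ℤ) (hr : 2 ≤ r) (hk1 : 1 ≤ k) (hkr : k ≤ r) :
    ∃ χ₁ χ₂ : ℤ, ∃ w₁ w₂ : ℚ,
      IsPolarization w₁ w₂ ∧ NumericalConditions r k χ₁ χ₂ w₁ w₂ :=
  W_rk_nonempty_general r k hk1
end

section
/- Let r ≥ 2 and 1 ≤ k ≤ r be integers and let χ₁, χ₂ be integers such that χ := χ₁ + χ₂ − r > 0. Then there exists a polarization (w₁, w₂) (rational numbers with 0 < wᵢ < 1 and w₁ + w₂ = 1) satisfying χ·w₁ ≤ χ₁ ≤ χ·w₁ + k and χ·w₂ + r − k ≤ χ₂ ≤ χ·w₂ + r, if and only if χ₁ > 0 and χ₂ > r − k. -/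
open Set

theorem Set.Icc_inter_Ioo_nonempty_iff {α : Type*} [LinearOrder α] [DenselyOrdered α]
    {lo hi a b : α} (hab : a < b) :
    (Icc lo hi ∩ Ioo a b).Nonempty ↔ lo ≤ hi ∧ a < hi ∧ lo < b := by
  constructor
  · rintro ⟨x, ⟨hlo, hhi⟩, ha, hb⟩
    exact ⟨hlo.trans hhi, ha.trans_le hhi, hlo.trans_lt hb⟩
  · rintro ⟨hlh, hah, hlb⟩
    have hM : max lo a < b := max_lt hlb hab
    have hm : a < min hi b := lt_min hah hab
    rcases (max_le (le_min hlh hlb.le) (le_min hah.le hab.le)).lt_or_eq with hlt | heq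
    · obtain ⟨x, hMx, hxm⟩ := exists_between hlt
      exact ⟨x, ⟨(le_max_left _ _).trans hMx.le, hxm.le.trans (min_le_left _ _)⟩,
        (le_max_right _ _).trans_lt hMx, hxm.trans_le (min_le_right _ _)⟩
    · exact ⟨min hi b, ⟨heq ▸ le_max_left _ _, min_le_left _ _⟩, hm, heq ▸ hM⟩

theorem exists_mem_Ioo_zero_one_mul_mem_iff {K : Type*} [Field K] [LinearOrder K]
    [IsStrictOrderedRing K] {c : K} (hc : 0 < c) (s : Set K) :
    (∃ w ∈ Ioo 0 1, c * w ∈ s) ↔ (s ∩ Ioo 0 c).Nonempty := by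
  have hIoo : Ioo 0 c = (c * ·) '' Ioo 0 1 := by rw [image_mul_left_Ioo hc, mul_zero, mul_one]
  rw [hIoo, inter_comm, image_inter_nonempty_iff]
  exact Iff.rfl

theorem isPolarization_iff {w₁ w₂ : ℚ} : IsPolarization w₁ w₂ ↔ w₁ ∈ Ioo 0 1 ∧ w₂ = 1 - w₁ := by
  unfold IsPolarization
  constructor
  · rintro ⟨h0, h1, -, -, hsum⟩
    exact ⟨⟨h0, h1⟩, by linarith⟩
  · rintro ⟨⟨h0, h1⟩, rfl⟩
    exact ⟨h0, h1, by linarith, by linarith, by ring⟩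

theorem numericalConditions_one_sub_iff (r k χ₁ χ₂ : ℤ) (w : ℚ) :
    NumericalConditions r k χ₁ χ₂ w (1 - w) ↔
      ((χ₁ + χ₂ - r : ℤ) : ℚ) * w ∈ Icc ((χ₁ : ℚ) - k) χ₁ := by
  unfold NumericalConditions
  push_cast
  constructor
  · rintro ⟨h₁, h₂, -, -⟩
    exact ⟨by linarith, h₁⟩
  · rintro ⟨h₁, h₂⟩
    exact ⟨h₂, by linarith, by linarith, by linarith⟩

theorem exists_polarization_numericalConditions_iff (r k χ₁ χ₂ : ℤ) :
    (∃ w₁ w₂ : ℚ, IsPolarization w₁ w₂ ∧ NumericalConditions r k χ₁ χ₂ w₁ w₂) ↔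
      ∃ w ∈ Ioo (0 : ℚ) 1, ((χ₁ + χ₂ - r : ℤ) : ℚ) * w ∈ Icc ((χ₁ : ℚ) - k) χ₁ := by
  simp only [isPolarization_iff, and_assoc, exists_and_left, exists_eq_left,
    numericalConditions_one_sub_iff]

theorem existence_polarization_pos_chi_general (r k χ₁ χ₂ : ℤ)
    (hk1 : 1 ≤ k) (hχ : 0 < χ₁ + χ₂ - r) :
    (∃ w₁ w₂ : ℚ, IsPolarization w₁ w₂ ∧ NumericalConditions r k χ₁ χ₂ w₁ w₂) ↔
      (0 < χ₁ ∧ r - k < χ₂) := by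
  have hχℚ : (0 : ℚ) < ((χ₁ + χ₂ - r : ℤ) : ℚ) := Int.cast_pos.mpr hχ
  rw [exists_polarization_numericalConditions_iff, exists_mem_Ioo_zero_one_mul_mem_iff hχℚ,
    Icc_inter_Ioo_nonempty_iff hχℚ]
  norm_cast
  omega

/-- The case `χ > 0` in the proof of Lemma 3.4: a suitable polarization exists iff
`χ₁ > 0` and `χ₂ > r - k`. -/
theorem existence_polarization_pos_chi (r k χ₁ χ₂ : ℤ) (hr : 2 ≤ r)
    (hk1 : 1 ≤ k) (hkr : k ≤ r) (hχ : 0 < χ₁ + χ₂ - r) :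
    (∃ w₁ w₂ : ℚ, IsPolarization w₁ w₂ ∧ NumericalConditions r k χ₁ χ₂ w₁ w₂) ↔
      (0 < χ₁ ∧ r - k < χ₂) :=
  existence_polarization_pos_chi_general r k χ₁ χ₂ hk1 hχ
end

section
/- Let r ≥ 2 be an integer and let χ₁, χ₂ be integers with χ = χ₁ + χ₂ − r. If there exists a polarization (w₁, w₂) satisfying the numerical conditions for (r, 1, χ₁, χ₂) (i.e. χ·w₁ ≤ χ₁ ≤ χ·w₁ + 1 and χ·w₂ + r − 1 ≤ χ₂ ≤ χ·w₂ + r), then there exists a single polarization (w₁, w₂) which satisfies the numerical conditions for (r, k, χ₁, χ₂) simultaneously for every integer k with 1 ≤ k ≤ r. -/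
theorem NumericalConditions.mono {r k k' χ₁ χ₂ : ℤ} {w₁ w₂ : ℚ}
    (h : NumericalConditions r k χ₁ χ₂ w₁ w₂) (hk : k ≤ k') :
    NumericalConditions r k' χ₁ χ₂ w₁ w₂ := by
  obtain ⟨h₁, h₂, h₃, h₄⟩ := h
  have hkq : (k : ℚ) ≤ k' := by exact_mod_cast hk
  exact ⟨h₁, by linarith, by linarith, h₄⟩

theorem one_polarization_for_all_k_general (r χ₁ χ₂ : ℤ)
    (h : ∃ w₁ w₂ : ℚ, IsPolarization w₁ w₂ ∧ NumericalConditions r 1 χ₁ χ₂ w₁ w₂) :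
    ∃ w₁ w₂ : ℚ, IsPolarization w₁ w₂ ∧
      ∀ k : ℤ, 1 ≤ k → k ≤ r → NumericalConditions r k χ₁ χ₂ w₁ w₂ := by
  obtain ⟨w₁, w₂, hpol, h₁⟩ := h
  exact ⟨w₁, w₂, hpol, fun _ hk _ => h₁.mono hk⟩

/-- Remark 3.5: if `(χ₁, χ₂) ∈ W_{r,1}`, then a single polarization satisfies the numerical
conditions for every `k` with `1 ≤ k ≤ r`. -/
theorem one_polarization_for_all_k (r χ₁ χ₂ : ℤ) (hr : 2 ≤ r)
    (h : ∃ w₁ w₂ : ℚ, IsPolarization w₁ w₂ ∧ NumericalConditions r 1 χ₁ χ₂ w₁ w₂) :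
    ∃ w₁ w₂ : ℚ, IsPolarization w₁ w₂ ∧
      ∀ k : ℤ, 1 ≤ k → k ≤ r → NumericalConditions r k χ₁ χ₂ w₁ w₂ :=
  one_polarization_for_all_k_general r χ₁ χ₂ h
end

section
/- Let r ≥ 2 and 1 ≤ k ≤ r − 1 be integers, let g₁, g₂ ≥ 1 and d₁, d₂ be integers, and set χ₁ = d₁ + r·(1 − g₁), χ₂ = d₂ + r·(1 − g₂), χ = χ₁ + χ₂ − r. Let (w₁, w₂) be a polarization (rationals with 0 < wᵢ < 1, w₁ + w₂ = 1) satisfying χ₁ ≤ χ·w₁ + k and χ₂ ≤ χ·w₂ + r. Let s₁, s₂, s, a₁, a₂ be integers with 1 ≤ s₁ ≤ r, 1 ≤ s₂ ≤ r, 0 ≤ s ≤ min(s₁, s₂), r·a₁ ≤ s₁·(d₁ − k) and r·a₂ ≤ s₂·(d₂ − 2r). Then (a₁ + s₁·(1 − g₁) + a₂ + s₂·(1 − g₂) + s) / (w₁·s₁ + w₂·s₂) ≤ χ / r. -/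
/-- Riemann–Roch: `χ` of a vector bundle of degree `d` and rank `n` on a curve of genus `g`. -/
def eulerChar {R : Type*} [Ring R] (d n g : R) : R :=
  d + n * (1 - g)

theorem mul_eulerChar_le_mul_sub {R : Type*} [CommRing R] [PartialOrder R] [IsOrderedRing R]
    {r s a d c : R} (g : R) (h : r * a ≤ s * (d - c)) :
    r * eulerChar a s g ≤ s * (eulerChar d r g - c) := by
  unfold eulerChar
  linear_combination h

theorem IsPolarization.weighted_rank_pos {w₁ w₂ s₁ s₂ : ℚ} (hw : IsPolarization w₁ w₂)
    (hs₁ : 0 < s₁) (hs₂ : 0 < s₂) : 0 < w₁ * s₁ + w₂ * s₂ := by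
  obtain ⟨hw₁, -, hw₂, -, -⟩ := hw
  positivity

theorem mul_add_le_mul_weighted_rank {R : Type*} [CommRing R] [LinearOrder R]
    [IsStrictOrderedRing R] {r k χ χ₁ χ₂ w₁ w₂ s₁ s₂ s e₁ e₂ : R}
    (hr : 0 ≤ r) (hs₁ : 0 ≤ s₁) (hs₂ : 0 ≤ s₂) (hs : s ≤ s₂)
    (he₁ : r * e₁ ≤ s₁ * (χ₁ - k)) (he₂ : r * e₂ ≤ s₂ * (χ₂ - 2 * r))
    (h₁ : χ₁ ≤ χ * w₁ + k) (h₂ : χ₂ ≤ χ * w₂ + r) :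
    r * (e₁ + e₂ + s) ≤ χ * (w₁ * s₁ + w₂ * s₂) :=
  calc r * (e₁ + e₂ + s) ≤ s₁ * (χ₁ - k) + s₂ * (χ₂ - 2 * r) + r * s := by linarith
    _ ≤ s₁ * (χ * w₁) + s₂ * (χ * w₂ - r) + r * s := by
      linarith [mul_le_mul_of_nonneg_left h₁ hs₁, mul_le_mul_of_nonneg_left h₂ hs₂]
    _ ≤ χ * (w₁ * s₁ + w₂ * s₂) := by linarith [mul_le_mul_of_nonneg_left hs hr]

theorem prop37_slope_bound_general (r k g₁ g₂ d₁ d₂ : ℤ) (hr : 2 ≤ r)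
    (χ₁ χ₂ χ : ℤ) (hχ₁ : χ₁ = d₁ + r * (1 - g₁)) (hχ₂ : χ₂ = d₂ + r * (1 - g₂))
    (w₁ w₂ : ℚ) (hpol : IsPolarization w₁ w₂)
    (hcond₁ : (χ₁ : ℚ) ≤ (χ : ℚ) * w₁ + (k : ℚ))
    (hcond₂ : (χ₂ : ℚ) ≤ (χ : ℚ) * w₂ + (r : ℚ))
    (s₁ s₂ s a₁ a₂ : ℤ) (hs₁1 : 1 ≤ s₁) (hs₂1 : 1 ≤ s₂)
    (hss : s ≤ min s₁ s₂)
    (ha₁ : r * a₁ ≤ s₁ * (d₁ - k)) (ha₂ : r * a₂ ≤ s₂ * (d₂ - 2 * r)) :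
    ((a₁ : ℚ) + (s₁ : ℚ) * (1 - (g₁ : ℚ)) + (a₂ : ℚ) + (s₂ : ℚ) * (1 - (g₂ : ℚ)) + (s : ℚ)) /
      (w₁ * (s₁ : ℚ) + w₂ * (s₂ : ℚ)) ≤ (χ : ℚ) / (r : ℚ) := by
  have hr₀ : (0 : ℚ) < r := by exact_mod_cast (by omega : 0 < r)
  have hs₁ : (0 : ℚ) < s₁ := by exact_mod_cast hs₁1
  have hs₂ : (0 : ℚ) < s₂ := by exact_mod_cast hs₂1
  have hs : (s : ℚ) ≤ s₂ := by exact_mod_cast hss.trans (min_le_right _ _)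
  have he₁ : (r : ℚ) * eulerChar (a₁ : ℚ) s₁ g₁ ≤ s₁ * (χ₁ - k) := by
    rw [show (χ₁ : ℚ) = eulerChar (d₁ : ℚ) r g₁ by rw [hχ₁]; push_cast; rfl]
    exact mul_eulerChar_le_mul_sub _ (by exact_mod_cast ha₁)
  have he₂ : (r : ℚ) * eulerChar (a₂ : ℚ) s₂ g₂ ≤ s₂ * (χ₂ - 2 * r) := by
    rw [show (χ₂ : ℚ) = eulerChar (d₂ : ℚ) r g₂ by rw [hχ₂]; push_cast; rfl]
    exact mul_eulerChar_le_mul_sub _ (by exact_mod_cast ha₂)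
  rw [div_le_div_iff₀ (hpol.weighted_rank_pos hs₁ hs₂) hr₀]
  have key := mul_add_le_mul_weighted_rank hr₀.le hs₁.le hs₂.le hs he₁ he₂ hcond₁ hcond₂
  simp only [eulerChar] at key
  linarith

/-- The numerical core of the proof of Proposition 3.7: the `w`-slope of a depth one subsheaf
is bounded above by `χ/r`. -/
theorem prop37_slope_bound (r k g₁ g₂ d₁ d₂ : ℤ) (hr : 2 ≤ r) (hk1 : 1 ≤ k)
    (hkr : k ≤ r - 1) (hg₁ : 1 ≤ g₁) (hg₂ : 1 ≤ g₂)
    (χ₁ χ₂ χ : ℤ) (hχ₁ : χ₁ = d₁ + r * (1 - g₁)) (hχ₂ : χ₂ = d₂ + r * (1 - g₂))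
    (hχ : χ = χ₁ + χ₂ - r)
    (w₁ w₂ : ℚ) (hpol : IsPolarization w₁ w₂)
    (hcond₁ : (χ₁ : ℚ) ≤ (χ : ℚ) * w₁ + (k : ℚ))
    (hcond₂ : (χ₂ : ℚ) ≤ (χ : ℚ) * w₂ + (r : ℚ))
    (s₁ s₂ s a₁ a₂ : ℤ) (hs₁1 : 1 ≤ s₁) (hs₁r : s₁ ≤ r) (hs₂1 : 1 ≤ s₂) (hs₂r : s₂ ≤ r)
    (hs0 : 0 ≤ s) (hss : s ≤ min s₁ s₂)
    (ha₁ : r * a₁ ≤ s₁ * (d₁ - k)) (ha₂ : r * a₂ ≤ s₂ * (d₂ - 2 * r)) :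
    ((a₁ : ℚ) + (s₁ : ℚ) * (1 - (g₁ : ℚ)) + (a₂ : ℚ) + (s₂ : ℚ) * (1 - (g₂ : ℚ)) + (s : ℚ)) /
      (w₁ * (s₁ : ℚ) + w₂ * (s₂ : ℚ)) ≤ (χ : ℚ) / (r : ℚ) :=
  prop37_slope_bound_general r k g₁ g₂ d₁ d₂ hr χ₁ χ₂ χ hχ₁ hχ₂ w₁ w₂ hpol hcond₁ hcond₂ s₁ s₂ s a₁
    a₂ hs₁1 hs₂1 hss ha₁ ha₂
end

section
/- Let r ≥ 2 and 1 ≤ k ≤ r − 1 be integers, let g₁, g₂ ≥ 1 and d₁, d₂ be integers, and set χ₁ = d₁ + r·(1 − g₁), χ₂ = d₂ + r·(1 − g₂), χ = χ₁ + χ₂ − r. Let (w₁, w₂) be a polarization (rationals with 0 < wᵢ < 1, w₁ + w₂ = 1) satisfying χ₁ ≤ χ·w₁ + k and χ₂ ≤ χ·w₂ + r. Let s₁, s₂, s, a₁, a₂ be integers with 1 ≤ s₁ ≤ r, 1 ≤ s₂ ≤ r, 0 ≤ s ≤ min(s₁, s₂), r·a₁ ≤ s₁·(d₁ − k) and r·a₂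 ≤ s₂·(d₂ − 2r). If moreover at least one of the two inequalities r·a₁ < s₁·(d₁ − k) or r·a₂ < s₂·(d₂ − 2r) is strict, then (a₁ + s₁·(1 − g₁) + a₂ + s₂·(1 − g₂) + s) / (w₁·s₁ + w₂·s₂) < χ / r. -/
/-!
Write `χ(Gᵢ) = aᵢ + sᵢ (1 - gᵢ)` for the Euler characteristics of the two parts of the subsheaf.
By Riemann–Roch the degree bound `r aᵢ ≤ sᵢ (dᵢ - cᵢ)` (with `c₁ = k`, `c₂ = 2r`) reads
`r χ(Gᵢ) ≤ sᵢ (χᵢ - cᵢ)` with the same slack, and the conditions on `χᵢ` give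
`s₁ (χ₁ - k) ≤ χ w₁ s₁` and `s₂ (χ₂ - 2r) ≤ χ w₂ s₂ - r s₂`. The leftover `r s₂` absorbs the gluing
term `r s`, so `r χ(F) ≤ χ (w₁ s₁ + w₂ s₂)`, strictly as soon as one degree bound is strict.
-/

section

variable {K : Type*} [Field K] [LinearOrder K] [IsStrictOrderedRing K]

theorem rank_mul_euler_sub_le_degree_slack {r a s d c g e χ' χ w : K} (hs : 0 ≤ s)
    (hχ' : χ' = d + r * (1 - g)) (hcond : χ' ≤ χ * w + c - e) :
    r * (a + s * (1 - g)) + s * e - χ * w * s ≤ r * a - s * (d - c) := by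
  have hscaled := mul_le_mul_of_nonneg_left hcond hs
  subst hχ'
  linarith

end

theorem prop37_slope_bound_strict_general (r k g₁ g₂ d₁ d₂ : ℤ) (hr : 2 ≤ r)
    (χ₁ χ₂ χ : ℤ) (hχ₁ : χ₁ = d₁ + r * (1 - g₁)) (hχ₂ : χ₂ = d₂ + r * (1 - g₂))
    (w₁ w₂ : ℚ) (hpol : IsPolarization w₁ w₂)
    (hcond₁ : (χ₁ : ℚ) ≤ (χ : ℚ) * w₁ + (k : ℚ))
    (hcond₂ : (χ₂ : ℚ) ≤ (χ : ℚ) * w₂ + (r : ℚ))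
    (s₁ s₂ s a₁ a₂ : ℤ) (hs₁1 : 1 ≤ s₁) (hs₂1 : 1 ≤ s₂)
    (hss : s ≤ min s₁ s₂)
    (ha₁ : r * a₁ ≤ s₁ * (d₁ - k)) (ha₂ : r * a₂ ≤ s₂ * (d₂ - 2 * r))
    (hstrict : r * a₁ < s₁ * (d₁ - k) ∨ r * a₂ < s₂ * (d₂ - 2 * r)) :
    ((a₁ : ℚ) + (s₁ : ℚ) * (1 - (g₁ : ℚ)) + (a₂ : ℚ) + (s₂ : ℚ) * (1 - (g₂ : ℚ)) + (s : ℚ)) /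
      (w₁ * (s₁ : ℚ) + w₂ * (s₂ : ℚ)) < (χ : ℚ) / (r : ℚ) := by
  obtain ⟨hw₁, -, hw₂, -, -⟩ := hpol
  qify at hr hχ₁ hχ₂ hs₁1 hs₂1 hss ha₁ ha₂ hstrict
  have hs : (s : ℚ) ≤ s₂ := hss.trans (min_le_right _ _)
  have hD : 0 < w₁ * s₁ + w₂ * s₂ := by nlinarith
  have h₁ := rank_mul_euler_sub_le_degree_slack (a := (a₁ : ℚ)) (s := s₁) (c := k) (e := 0)
    (by linarith) hχ₁ (by linarith : (χ₁ : ℚ) ≤ χ * w₁ + k - 0)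
  have h₂ := rank_mul_euler_sub_le_degree_slack (a := (a₂ : ℚ)) (s := s₂) (c := 2 * r) (e := r)
    (by linarith) hχ₂ (by linarith : (χ₂ : ℚ) ≤ χ * w₂ + 2 * r - r)
  have hrs : (r : ℚ) * s ≤ r * s₂ := mul_le_mul_of_nonneg_left hs (by linarith)
  rw [div_lt_div_iff₀ hD (by linarith)]
  rcases hstrict with h | h <;> linarith

/-- The strict-inequality refinement in the proof of Proposition 3.7: if one of the degree
bounds is strict, the `w`-slope of the subsheaf is strictly less than `χ/r`. -/
theorem prop37_slope_bound_strict (r k g₁ g₂ d₁ d₂ : ℤ) (hr : 2 ≤ r) (hk1 : 1 ≤ k)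
    (hkr : k ≤ r - 1) (hg₁ : 1 ≤ g₁) (hg₂ : 1 ≤ g₂)
    (χ₁ χ₂ χ : ℤ) (hχ₁ : χ₁ = d₁ + r * (1 - g₁)) (hχ₂ : χ₂ = d₂ + r * (1 - g₂))
    (hχ : χ = χ₁ + χ₂ - r)
    (w₁ w₂ : ℚ) (hpol : IsPolarization w₁ w₂)
    (hcond₁ : (χ₁ : ℚ) ≤ (χ : ℚ) * w₁ + (k : ℚ))
    (hcond₂ : (χ₂ : ℚ) ≤ (χ : ℚ) * w₂ + (r : ℚ))
    (s₁ s₂ s a₁ a₂ : ℤ) (hs₁1 : 1 ≤ s₁) (hs₁r : s₁ ≤ r) (hs₂1 : 1 ≤ s₂) (hs₂r : s₂ ≤ r)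
    (hs0 : 0 ≤ s) (hss : s ≤ min s₁ s₂)
    (ha₁ : r * a₁ ≤ s₁ * (d₁ - k)) (ha₂ : r * a₂ ≤ s₂ * (d₂ - 2 * r))
    (hstrict : r * a₁ < s₁ * (d₁ - k) ∨ r * a₂ < s₂ * (d₂ - 2 * r)) :
    ((a₁ : ℚ) + (s₁ : ℚ) * (1 - (g₁ : ℚ)) + (a₂ : ℚ) + (s₂ : ℚ) * (1 - (g₂ : ℚ)) + (s : ℚ)) /
      (w₁ * (s₁ : ℚ) + w₂ * (s₂ : ℚ)) < (χ : ℚ) / (r : ℚ) :=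
  prop37_slope_bound_strict_general r k g₁ g₂ d₁ d₂ hr χ₁ χ₂ χ hχ₁ hχ₂ w₁ w₂ hpol hcond₁ hcond₂ s₁
    s₂ s a₁ a₂ hs₁1 hs₂1 hss ha₁ ha₂ hstrict
end
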